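/- Fix a weight vector v̄ ∈ (0,1)^{p−s₀} and let W̄ = diag(1 + v̄). Let b*(v̄) minimize ‖Xb‖₂² subject to ‖b_{S₀}‖₁ − ‖W̄ b_{−S₀}‖₁ = 1, with sign vector z*_{S₀}(v̄) on S₀. For any weight vector w with 1 − v̄_j ≤ w_j ≤ 1 + v̄_j for all j ∉ S₀, let b(w) minimize ‖Xb‖₂² subject to z_{S₀}^{*T}(v̄) b_{S₀} − ‖W b_{−S₀}‖₁ ≥ 1 (W = diag(w)). Then X^T X b(w) = ‖Xb(w)‖₂² · W z(w) for some z(w) with z_{S₀}(w) = z*_{S₀}(v̄) and z_{−S₀}(w) ∈ −∂‖b_{−S₀}(w)‖₁; moreover s₀·‖Xb(w)‖₂²/n ≤ κ̂²(1+v̄, S₀). -/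

import Mathlib

open Finset

noncomputable def l1 {p : ℕ} (b : Fin p → ℝ) : ℝ := ∑ j, |b j|

def restr {p : ℕ} (S : Finset (Fin p)) (b : Fin p → ℝ) : Fin p → ℝ :=
  fun j => if j ∈ S then b j else 0

noncomputable def qf {n p : ℕ} (X : Matrix (Fin n) (Fin p) ℝ) (b : Fin p → ℝ) : ℝ :=
  ∑ i, (X.mulVec b i) ^ 2

/-!
Let `Q b = ‖X b‖²` and let `F` be the (positively homogeneous) constraint function. Since `b / F b`
competes with the minimizer `b₀` whenever `F b > 0`, we get `Q b₀ · F(b)² ≤ Q b`. Along a line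
`b₀ + t d` on which `F` is affine near `t = 0⁺` with slope `D`, expanding both sides to first order
gives `Q b₀ · D ≤ ⟨X b₀, X d⟩`. For the coordinate directions the one-sided slopes of `F` are `s j`
on `S`, `-w j · sign (b₀ j)` off `S` where `b₀ j ≠ 0`, and `∓ w j` where `b₀ j = 0`; this is the
stationarity condition `XᵀX b₀ = ‖X b₀‖² W z` with `z` a subgradient. The bound on `‖X b(w)‖²`
holds because `b*(v̄)` is feasible for the `w`-problem once `w ≤ 1 + v̄`.
-/

open Filter Topology Matrix

section QuadraticForm

variable {n p : ℕ} (X : Matrix (Fin n) (Fin p) ℝ)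

theorem qf_eq_dotProduct (b : Fin p → ℝ) : qf X b = X *ᵥ b ⬝ᵥ X *ᵥ b := by
  simp only [qf, dotProduct, sq]

theorem qf_nonneg (b : Fin p → ℝ) : 0 ≤ qf X b :=
  sum_nonneg fun _ _ => sq_nonneg _

theorem qf_smul (a : ℝ) (b : Fin p → ℝ) : qf X (a • b) = a ^ 2 * qf X b := by
  simp only [qf_eq_dotProduct, mulVec_smul, smul_dotProduct, dotProduct_smul, smul_eq_mul]
  ring

theorem qf_add_smul (b d : Fin p → ℝ) (t : ℝ) :
    qf X (b + t • d) = qf X b + 2 * t * (X *ᵥ b ⬝ᵥ X *ᵥ d) + t ^ 2 * qf X d := by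
  simp only [qf_eq_dotProduct, mulVec_add, mulVec_smul, add_dotProduct, dotProduct_add,
    smul_dotProduct, dotProduct_smul, smul_eq_mul, dotProduct_comm (X *ᵥ d) (X *ᵥ b)]
  ring

theorem transpose_mul_self_mulVec_apply (b : Fin p → ℝ) (j : Fin p) :
    ((Xᵀ * X) *ᵥ b) j = X *ᵥ b ⬝ᵥ X *ᵥ Pi.single j 1 := by
  simp only [← mulVec_mulVec, mulVec_single_one, mulVec_transpose, vecMul, dotProduct, col,
    transpose_apply, mul_comm]

end QuadraticForm

theorem nonpos_of_eventually_mul_le_mul_sq {A B : ℝ}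
    (h : ∀ᶠ t in 𝓝[>] (0 : ℝ), A * t ≤ B * t ^ 2) : A ≤ 0 := by
  have hlim : Tendsto (fun t : ℝ => B * t) (𝓝[>] 0) (𝓝 0) := by
    simpa using (tendsto_const_nhds.mul tendsto_id : Tendsto (B * ·) (𝓝 0) (𝓝 (B * 0)))
      |>.mono_left nhdsWithin_le_nhds
  refine ge_of_tendsto hlim ?_
  filter_upwards [h, self_mem_nhdsWithin] with t ht (htpos : 0 < t)
  nlinarith

section HomogeneousConstraint

variable {n p : ℕ} {X : Matrix (Fin n) (Fin p) ℝ} {F : (Fin p → ℝ) → ℝ} {b₀ : Fin p → ℝ}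

theorem qf_mul_sq_le_of_isMin (hF : ∀ a : ℝ, 0 ≤ a → ∀ b, F (a • b) = a * F b)
    (hmin : ∀ b, 1 ≤ F b → qf X b₀ ≤ qf X b) {b : Fin p → ℝ} (hb : 0 < F b) :
    qf X b₀ * F b ^ 2 ≤ qf X b := by
  have h := hmin ((F b)⁻¹ • b) (by rw [hF _ (inv_nonneg.2 hb.le), inv_mul_cancel₀ hb.ne'])
  rw [qf_smul, inv_pow] at h
  calc qf X b₀ * F b ^ 2 ≤ ((F b ^ 2)⁻¹ * qf X b) * F b ^ 2 := by gcongr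
    _ = qf X b := by field_simp

theorem qf_mul_le_dotProduct_of_right_slope (hF : ∀ a : ℝ, 0 ≤ a → ∀ b, F (a • b) = a * F b)
    (hb₀ : 1 ≤ F b₀) (hmin : ∀ b, 1 ≤ F b → qf X b₀ ≤ qf X b) {d : Fin p → ℝ} {D : ℝ}
    (hslope : ∀ᶠ t in 𝓝[>] (0 : ℝ), F (b₀ + t • d) = F b₀ + D * t) :
    qf X b₀ * D ≤ X *ᵥ b₀ ⬝ᵥ X *ᵥ d := by
  set L := qf X b₀
  set c := F b₀
  have hL : 0 ≤ L := qf_nonneg X b₀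
  -- `b₀` is a competitor of itself, so `L c² ≤ L`; with `c ≥ 1` this forces `L c = L`.
  have hLc : L * c = L := by
    have h := qf_mul_sq_le_of_isMin hF hmin (b := b₀) (by linarith)
    nlinarith [mul_nonneg hL (sub_nonneg.2 hb₀)]
  have hpos : ∀ᶠ t in 𝓝[>] (0 : ℝ), 0 < c + D * t := by
    have : Tendsto (fun t : ℝ => c + D * t) (𝓝 0) (𝓝 (c + D * 0)) :=
      tendsto_const_nhds.add (tendsto_const_nhds.mul tendsto_id)
    exact (this.mono_left nhdsWithin_le_nhds).eventually_const_lt (by simp; linarith)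
  suffices L * D - X *ᵥ b₀ ⬝ᵥ X *ᵥ d ≤ 0 by linarith
  refine nonpos_of_eventually_mul_le_mul_sq (B := (qf X d - L * D ^ 2) / 2) ?_
  filter_upwards [hslope, hpos] with t ht htpos
  have h := qf_mul_sq_le_of_isMin hF hmin (b := b₀ + t • d) (by rwa [ht])
  rw [ht, qf_add_smul] at h
  nlinarith

theorem dotProduct_le_qf_mul_of_left_slope (hF : ∀ a : ℝ, 0 ≤ a → ∀ b, F (a • b) = a * F b)
    (hb₀ : 1 ≤ F b₀) (hmin : ∀ b, 1 ≤ F b → qf X b₀ ≤ qf X b) {d : Fin p → ℝ} {D : ℝ}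
    (hslope : ∀ᶠ t in 𝓝[>] (0 : ℝ), F (b₀ - t • d) = F b₀ - D * t) :
    X *ᵥ b₀ ⬝ᵥ X *ᵥ d ≤ qf X b₀ * D := by
  have h := qf_mul_le_dotProduct_of_right_slope hF hb₀ hmin (d := -d) (D := -D) <| by
    filter_upwards [hslope] with t ht
    rw [smul_neg, ← sub_eq_add_neg, ht]
    ring
  rw [mulVec_neg, dotProduct_neg] at h
  linarith

theorem dotProduct_eq_qf_mul_of_slope (hF : ∀ a : ℝ, 0 ≤ a → ∀ b, F (a • b) = a * F b)
    (hb₀ : 1 ≤ F b₀) (hmin : ∀ b, 1 ≤ F b → qf X b₀ ≤ qf X b) {d : Fin p → ℝ} {D : ℝ}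
    (hslope : ∀ᶠ t in 𝓝 (0 : ℝ), F (b₀ + t • d) = F b₀ + D * t) :
    X *ᵥ b₀ ⬝ᵥ X *ᵥ d = qf X b₀ * D := by
  have hneg : ∀ᶠ t in 𝓝 (0 : ℝ), F (b₀ + (-t) • d) = F b₀ + D * -t :=
    (continuous_neg.tendsto' 0 0 neg_zero).eventually hslope
  refine le_antisymm (dotProduct_le_qf_mul_of_left_slope hF hb₀ hmin ?_)
    (qf_mul_le_dotProduct_of_right_slope hF hb₀ hmin (nhdsWithin_le_nhds hslope))
  filter_upwards [nhdsWithin_le_nhds hneg] with t ht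
  rw [sub_eq_add_neg, ← neg_smul, ht]
  ring

end HomogeneousConstraint

theorem Real.sign_mul_self_eq_abs (x : ℝ) : Real.sign x * x = |x| := by
  rcases lt_trichotomy x 0 with hx | rfl | hx
  · rw [Real.sign_of_neg hx, abs_of_neg hx, neg_one_mul]
  · simp
  · rw [Real.sign_of_pos hx, abs_of_pos hx, one_mul]

theorem Real.abs_sign_le_one (x : ℝ) : |Real.sign x| ≤ 1 := by
  rcases Real.sign_apply_eq x with h | h | h <;> simp [h]

theorem abs_add_eventually_eq {x : ℝ} (hx : x ≠ 0) :
    ∀ᶠ t in 𝓝 (0 : ℝ), |x + t| = |x| + Real.sign x * t := by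
  have hlim : Tendsto (fun t : ℝ => x + t) (𝓝 0) (𝓝 x) := by
    simpa using (tendsto_const_nhds (x := x)).add (tendsto_id (x := 𝓝 (0 : ℝ)))
  rcases hx.lt_or_gt with hneg | hpos
  · filter_upwards [hlim.eventually_lt_const hneg] with t ht
    rw [abs_of_neg ht, abs_of_neg hneg, Real.sign_of_neg hneg]
    ring
  · filter_upwards [hlim.eventually_const_lt hpos] with t ht
    rw [abs_of_pos ht, abs_of_pos hpos, Real.sign_of_pos hpos]
    ring

theorem exists_abs_le_one_and_eq_mul {g a : ℝ} (h : |g| ≤ a) : ∃ z, |z| ≤ 1 ∧ g = a * z := by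
  rcases (abs_nonneg g).trans h |>.eq_or_lt with ha | ha
  · exact ⟨0, by simp, by rw [← ha] at h; simpa using h⟩
  · refine ⟨g / a, ?_, by field_simp⟩
    rwa [abs_div, abs_of_pos ha, div_le_one ha]

section SignedMargin

variable {p : ℕ} (S : Finset (Fin p)) (s w : Fin p → ℝ)

/-- The constraint function `z_Sᵀ b_S - ‖W b_{-S}‖₁` of the weighted problem, with `z_S = s`. -/
noncomputable def signedMargin (b : Fin p → ℝ) : ℝ :=
  ∑ j ∈ S, s j * b j - ∑ j ∈ Sᶜ, w j * |b j|

theorem signedMargin_smul {a : ℝ} (ha : 0 ≤ a) (b : Fin p → ℝ) :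
    signedMargin S s w (a • b) = a * signedMargin S s w b := by
  simp only [signedMargin, Pi.smul_apply, smul_eq_mul, abs_mul, abs_of_nonneg ha, mul_sub,
    mul_sum]
  congr 1 <;> refine sum_congr rfl fun _ _ => by ring

theorem signedMargin_add_single_of_mem {j : Fin p} (hj : j ∈ S) (b : Fin p → ℝ) (t : ℝ) :
    signedMargin S s w (b + t • Pi.single j 1) = signedMargin S s w b + s j * t := by
  have hoff : ∑ k ∈ Sᶜ, w k * |b k + if k = j then t else 0| = ∑ k ∈ Sᶜ, w k * |b k| :=
    sum_congr rfl fun k hk => by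
      rw [if_neg (ne_of_mem_of_not_mem hk (notMem_compl.2 hj)), add_zero]
  simp only [signedMargin, Pi.add_apply, Pi.smul_apply, Pi.single_apply, smul_eq_mul, mul_ite,
    mul_one, mul_zero, mul_add, sum_add_distrib, sum_ite_eq', hj, if_true, hoff]
  ring

theorem signedMargin_add_single_of_notMem {j : Fin p} (hj : j ∉ S) (b : Fin p → ℝ) (t : ℝ) :
    signedMargin S s w (b + t • Pi.single j 1)
      = signedMargin S s w b - w j * (|b j + t| - |b j|) := by
  have hon : ∑ k ∈ S, s k * (b k + if k = j then t else 0) = ∑ k ∈ S, s k * b k :=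
    sum_congr rfl fun k hk => by rw [if_neg (ne_of_mem_of_not_mem hk hj), add_zero]
  have hoff : ∑ k ∈ Sᶜ.erase j, w k * |b k + if k = j then t else 0|
      = ∑ k ∈ Sᶜ.erase j, w k * |b k| :=
    sum_congr rfl fun k hk => by rw [if_neg (ne_of_mem_erase hk), add_zero]
  simp only [signedMargin, Pi.add_apply, Pi.smul_apply, Pi.single_apply, smul_eq_mul, mul_ite,
    mul_one, mul_zero, hon]
  rw [← add_sum_erase _ _ (mem_compl.2 hj),
    ← add_sum_erase _ (fun k => w k * |b k|) (mem_compl.2 hj), hoff, if_pos rfl]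
  ring

end SignedMargin

section Optimality

variable {n p : ℕ} {X : Matrix (Fin n) (Fin p) ℝ} {S : Finset (Fin p)} {s w bw : Fin p → ℝ}

theorem transpose_mul_self_mulVec_apply_of_mem (hcon : 1 ≤ signedMargin S s w bw)
    (hmin : ∀ b, 1 ≤ signedMargin S s w b → qf X bw ≤ qf X b) {j : Fin p} (hj : j ∈ S) :
    ((Xᵀ * X) *ᵥ bw) j = qf X bw * s j := by
  rw [transpose_mul_self_mulVec_apply]
  refine dotProduct_eq_qf_mul_of_slope (fun a ha => signedMargin_smul S s w ha) hcon hmin ?_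
  exact .of_forall fun t => signedMargin_add_single_of_mem S s w hj bw t

theorem transpose_mul_self_mulVec_apply_of_notMem_of_ne_zero
    (hcon : 1 ≤ signedMargin S s w bw)
    (hmin : ∀ b, 1 ≤ signedMargin S s w b → qf X bw ≤ qf X b) {j : Fin p} (hj : j ∉ S)
    (hbj : bw j ≠ 0) :
    ((Xᵀ * X) *ᵥ bw) j = qf X bw * (w j * -Real.sign (bw j)) := by
  rw [transpose_mul_self_mulVec_apply]
  refine dotProduct_eq_qf_mul_of_slope (fun a ha => signedMargin_smul S s w ha) hcon hmin ?_
  filter_upwards [abs_add_eventually_eq hbj] with t ht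
  rw [signedMargin_add_single_of_notMem S s w hj, ht]
  ring

theorem abs_transpose_mul_self_mulVec_apply_le_of_notMem_of_eq_zero
    (hcon : 1 ≤ signedMargin S s w bw)
    (hmin : ∀ b, 1 ≤ signedMargin S s w b → qf X bw ≤ qf X b) {j : Fin p} (hj : j ∉ S)
    (hbj : bw j = 0) :
    |((Xᵀ * X) *ᵥ bw) j| ≤ qf X bw * w j := by
  have hF : ∀ a : ℝ, 0 ≤ a → ∀ b, signedMargin S s w (a • b) = a * signedMargin S s w b :=
    fun a ha => signedMargin_smul S s w ha
  rw [transpose_mul_self_mulVec_apply, abs_le]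
  constructor
  · have h := qf_mul_le_dotProduct_of_right_slope hF hcon hmin (D := -w j) <| by
      filter_upwards [self_mem_nhdsWithin] with t (ht : 0 < t)
      rw [signedMargin_add_single_of_notMem S s w hj, hbj, zero_add, abs_zero, abs_of_pos ht]
      ring
    linarith
  · refine dotProduct_le_qf_mul_of_left_slope hF hcon hmin ?_
    filter_upwards [self_mem_nhdsWithin] with t (ht : 0 < t)
    rw [sub_eq_add_neg, ← neg_smul, signedMargin_add_single_of_notMem S s w hj, hbj, zero_add,
      abs_zero, abs_neg, abs_of_pos ht]
    ring

theorem exists_subgradient_of_isMin (hcon : 1 ≤ signedMargin S s w bw)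
    (hmin : ∀ b, 1 ≤ signedMargin S s w b → qf X bw ≤ qf X b) :
    ∃ z : Fin p → ℝ,
      (∀ j, ((Xᵀ * X) *ᵥ bw) j = qf X bw * ((if j ∈ S then 1 else w j) * z j)) ∧
      (∀ j ∈ S, z j = s j) ∧
      (∀ j ∉ S, |z j| ≤ 1) ∧
      (∑ j ∈ Sᶜ, z j * bw j) = -(∑ j ∈ Sᶜ, |bw j|) := by
  have hcoord : ∀ j, ∃ zj : ℝ, ((Xᵀ * X) *ᵥ bw) j = qf X bw * ((if j ∈ S then 1 else w j) * zj)
      ∧ (j ∈ S → zj = s j) ∧ (j ∉ S → |zj| ≤ 1 ∧ zj * bw j = -|bw j|) := by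
    intro j
    by_cases hj : j ∈ S
    · refine ⟨s j, ?_, fun _ => rfl, fun h => absurd hj h⟩
      rw [if_pos hj, one_mul, transpose_mul_self_mulVec_apply_of_mem hcon hmin hj]
    by_cases hbj : bw j = 0
    · obtain ⟨zj, hzj, hg⟩ := exists_abs_le_one_and_eq_mul
        (abs_transpose_mul_self_mulVec_apply_le_of_notMem_of_eq_zero hcon hmin hj hbj)
      refine ⟨zj, ?_, fun h => absurd h hj, fun _ => ⟨hzj, by simp [hbj]⟩⟩
      rw [if_neg hj, hg, mul_assoc]
    · refine ⟨-Real.sign (bw j), ?_, fun h => absurd h hj, fun _ => ⟨?_, ?_⟩⟩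
      · rw [if_neg hj, transpose_mul_self_mulVec_apply_of_notMem_of_ne_zero hcon hmin hj hbj]
      · rw [abs_neg]; exact Real.abs_sign_le_one _
      · rw [neg_mul, Real.sign_mul_self_eq_abs]
  choose z hz using hcoord
  refine ⟨z, fun j => (hz j).1, fun j hj => (hz j).2.1 hj, fun j hj => ((hz j).2.2 hj).1, ?_⟩
  rw [← sum_neg_distrib]
  exact sum_congr rfl fun j hj => ((hz j).2.2 (mem_compl.1 hj)).2

end Optimality

theorem l1_restr {p : ℕ} (S : Finset (Fin p)) (b : Fin p → ℝ) :
    l1 (restr S b) = ∑ j ∈ S, |b j| := by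
  simp only [l1, restr, apply_ite abs, abs_zero, sum_ite_mem, univ_inter]

theorem stmt17_general {n p : ℕ} (X : Matrix (Fin n) (Fin p) ℝ) (S0 : Finset (Fin p))
    (vbar : Fin p → ℝ)
    (bstar : Fin p → ℝ)
    (hconstar : l1 (restr S0 bstar) - (∑ j ∈ S0ᶜ, (1 + vbar j) * |bstar j|) = 1)
    (w : Fin p → ℝ) (hw : ∀ j ∉ S0, 1 - vbar j ≤ w j ∧ w j ≤ 1 + vbar j)
    (bw : Fin p → ℝ)
    (hconw : (∑ j ∈ S0, Real.sign (bstar j) * bw j) - (∑ j ∈ S0ᶜ, w j * |bw j|) ≥ 1)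
    (hminw : ∀ b : Fin p → ℝ,
      (∑ j ∈ S0, Real.sign (bstar j) * b j) - (∑ j ∈ S0ᶜ, w j * |b j|) ≥ 1 →
      qf X bw ≤ qf X b) :
    (∃ z : Fin p → ℝ,
      (∀ j, ((X.transpose * X).mulVec bw) j =
        qf X bw * ((if j ∈ S0 then 1 else w j) * z j)) ∧
      (∀ j ∈ S0, z j = Real.sign (bstar j)) ∧
      (∀ j ∉ S0, |z j| ≤ 1) ∧
      (∑ j ∈ S0ᶜ, z j * bw j) = -(∑ j ∈ S0ᶜ, |bw j|)) ∧
    (S0.card : ℝ) * qf X bw / n ≤ (S0.card : ℝ) * qf X bstar / n := by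
  refine ⟨exists_subgradient_of_isMin (s := fun j => Real.sign (bstar j)) hconw hminw, ?_⟩
  have hfeas : 1 ≤ signedMargin S0 (fun j => Real.sign (bstar j)) w bstar := by
    have hweights : ∑ j ∈ S0ᶜ, w j * |bstar j| ≤ ∑ j ∈ S0ᶜ, (1 + vbar j) * |bstar j| :=
      sum_le_sum fun j hj =>
        mul_le_mul_of_nonneg_right (hw j (mem_compl.1 hj)).2 (abs_nonneg _)
    simp only [signedMargin, Real.sign_mul_self_eq_abs]
    rw [l1_restr] at hconstar
    linarith
  have hqf := hminw bstar hfeas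
  gcongr

theorem stmt17 {n p : ℕ} (X : Matrix (Fin n) (Fin p) ℝ) (S0 : Finset (Fin p))
    (vbar : Fin p → ℝ) (hv : ∀ j ∉ S0, 0 < vbar j ∧ vbar j < 1)
    (bstar : Fin p → ℝ)
    (hconstar : l1 (restr S0 bstar) - (∑ j ∈ S0ᶜ, (1 + vbar j) * |bstar j|) = 1)
    (hminstar : ∀ b : Fin p → ℝ,
      l1 (restr S0 b) - (∑ j ∈ S0ᶜ, (1 + vbar j) * |b j|) = 1 → qf X bstar ≤ qf X b)
    (w : Fin p → ℝ) (hw : ∀ j ∉ S0, 1 - vbar j ≤ w j ∧ w j ≤ 1 + vbar j)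
    (bw : Fin p → ℝ)
    (hconw : (∑ j ∈ S0, Real.sign (bstar j) * bw j) - (∑ j ∈ S0ᶜ, w j * |bw j|) ≥ 1)
    (hminw : ∀ b : Fin p → ℝ,
      (∑ j ∈ S0, Real.sign (bstar j) * b j) - (∑ j ∈ S0ᶜ, w j * |b j|) ≥ 1 →
      qf X bw ≤ qf X b) :
    (∃ z : Fin p → ℝ,
      (∀ j, ((X.transpose * X).mulVec bw) j =
        qf X bw * ((if j ∈ S0 then 1 else w j) * z j)) ∧
      (∀ j ∈ S0, z j = Real.sign (bstar j)) ∧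
      (∀ j ∉ S0, |z j| ≤ 1) ∧
      (∑ j ∈ S0ᶜ, z j * bw j) = -(∑ j ∈ S0ᶜ, |bw j|)) ∧
    (S0.card : ℝ) * qf X bw / n ≤ (S0.card : ℝ) * qf X bstar / n :=
  stmt17_general X S0 vbar bstar hconstar w hw bw hconw hminw
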